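/- If (q, p) is a maximizer of Problem (P), then the energy-causality constraint holds with equality at the last slot: ∑_{k=1}^{K} ∑_{n∈N_k^I} p_{k,n} = ζ·∑_{k=1}^{K−1} h_k·q_k + B1. -/
import Mathlib


noncomputable section

/-- The information sub-channel set `N_k^I = {0,…,N} \ {Π(k)}`. -/
def NI (N : ℕ) (Pi : ℕ → ℕ) (k : ℕ) : Finset ℕ := Finset.Icc 0 N \ {Pi k}

/-- Feasibility for Problem (P) with a single WET sub-channel `Π(k)` per slot. -/
def FeasibleP (K N : ℕ) (h : ℕ → ℕ → ℝ) (Q ζ B1 : ℝ) (Pi : ℕ → ℕ)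
    (q : ℕ → ℝ) (p : ℕ → ℕ → ℝ) : Prop :=
  (∀ k ∈ Finset.Icc 1 K, 0 ≤ q k) ∧
  (∀ k ∈ Finset.Icc 1 K, Pi k = 0 → q k = 0) ∧
  (∀ k ∈ Finset.Icc 1 K, ∀ n ∈ NI N Pi k, 0 ≤ p k n) ∧
  (∑ k ∈ Finset.Icc 1 K, q k ≤ (K : ℝ) * Q) ∧
  (∀ i ∈ Finset.Icc 1 K,
    ∑ k ∈ Finset.Icc 1 i, ∑ n ∈ NI N Pi k, p k n ≤
      ζ * ∑ k ∈ Finset.Icc 1 (i - 1), h k (Pi k) * q k + B1)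

/-- Achievable rate for Problem (P). -/
def RateP (K N : ℕ) (g : ℕ → ℕ → ℝ) (Γσ : ℝ) (Pi : ℕ → ℕ) (p : ℕ → ℕ → ℝ) : ℝ :=
  (1 / ((K : ℝ) * N)) * ∑ k ∈ Finset.Icc 1 K, ∑ n ∈ NI N Pi k,
    Real.logb 2 (1 + g k n * p k n / Γσ)

open Classical in
/-- The set `D` of causally dominating slots. -/
def Dset (K : ℕ) (h : ℕ → ℕ → ℝ) (Pi : ℕ → ℕ) : Finset ℕ :=
  (Finset.Icc 1 (K - 1)).filter
    (fun k => Pi k ≠ 0 ∧ ∀ j, 1 ≤ j → j < k → h j (Pi j) < h k (Pi k))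

end

theorem stmt3
    (K N : ℕ) (hK : 2 ≤ K) (hN : 2 ≤ N)
    (h g : ℕ → ℕ → ℝ)
    (hpos : ∀ k ∈ Finset.Icc 1 K, ∀ n ∈ Finset.Icc 1 N, 0 < h k n ∧ 0 < g k n)
    (hzero : ∀ k, h k 0 = 0 ∧ g k 0 = 0)
    (Q ζ B1 Γσ : ℝ) (hQ : 0 < Q) (hζ : 0 < ζ) (hB1 : 0 ≤ B1) (hΓσ : 0 < Γσ)
    (Pi : ℕ → ℕ) (hPiK : Pi K = 0) (hPiR : ∀ k ∈ Finset.Icc 1 K, Pi k ≤ N)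
    (q : ℕ → ℝ) (p : ℕ → ℕ → ℝ)
    (hfeas : FeasibleP K N h Q ζ B1 Pi q p)
    (hopt : ∀ q' p', FeasibleP K N h Q ζ B1 Pi q' p' →
      RateP K N g Γσ Pi p' ≤ RateP K N g Γσ Pi p)
    :
    ∑ k ∈ Finset.Icc 1 K, ∑ n ∈ NI N Pi k, p k n =
      ζ * ∑ k ∈ Finset.Icc 1 (K - 1), h k (Pi k) * q k + B1 := by
  classical
  obtain ⟨hq0, hq0', hp0, hsumq, hcons⟩ := hfeas
  have hKmem : K ∈ Finset.Icc 1 K := by simp; omega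
  have hle := hcons K hKmem
  by_contra hne
  have hlt : ∑ k ∈ Finset.Icc 1 K, ∑ n ∈ NI N Pi k, p k n <
      ζ * ∑ k ∈ Finset.Icc 1 (K - 1), h k (Pi k) * q k + B1 := lt_of_le_of_ne hle hne
  set ε := ζ * ∑ k ∈ Finset.Icc 1 (K-1), h k (Pi k) * q k + B1
      - ∑ k ∈ Finset.Icc 1 K, ∑ n ∈ NI N Pi k, p k n with hεdef
  have hεpos : 0 < ε := by simp [hεdef]; linarith
  have h1NI : (1 : ℕ) ∈ NI N Pi K := by simp [NI, hPiK]; omega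
  have h1N : (1 : ℕ) ∈ Finset.Icc 1 N := by simp; omega
  have hg1 : 0 < g K 1 := (hpos K hKmem 1 h1N).2
  have hpK1 : 0 ≤ p K 1 := hp0 K hKmem 1 h1NI
  set p' : ℕ → ℕ → ℝ := fun k n => p k n + if k = K ∧ n = 1 then ε else 0 with hp'def
  have hinner : ∀ k, ∑ n ∈ NI N Pi k, (if k = K ∧ n = 1 then ε else 0)
      = if k = K then ε else 0 := by
    intro k
    by_cases hk : k = K
    · simp only [hk, true_and, if_pos rfl]
      rw [Finset.sum_ite_eq' (NI N Pi K) 1 (fun _ => ε), if_pos h1NI]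
      simp
    · simp [hk]
  have hsump' : ∀ i, ∑ k ∈ Finset.Icc 1 i, ∑ n ∈ NI N Pi k, p' k n
      = (∑ k ∈ Finset.Icc 1 i, ∑ n ∈ NI N Pi k, p k n)
        + (if K ∈ Finset.Icc 1 i then ε else 0) := by
    intro i
    simp only [hp'def, Finset.sum_add_distrib, hinner]
    rw [Finset.sum_ite_eq' (Finset.Icc 1 i) K (fun _ => ε)]
  have hfeas' : FeasibleP K N h Q ζ B1 Pi q p' := by
    refine ⟨hq0, hq0', ?_, hsumq, ?_⟩
    · intro k hk n hn
      have := hp0 k hk n hn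
      simp only [hp'def]
      by_cases hc : k = K ∧ n = 1 <;> simp [hc] <;> linarith
    · intro i hi
      rw [hsump' i]
      by_cases hiK : i = K
      · subst hiK
        rw [if_pos hKmem]
        linarith [hεdef.ge]
      · have hiltK : i < K := by simp at hi; omega
        have : K ∉ Finset.Icc 1 i := by simp; omega
        rw [if_neg this]
        simpa using hcons i hi
  have hrate := hopt q p' hfeas'
  -- show RateP p < RateP p', contradiction
  have hc : 0 < 1 / ((K : ℝ) * N) := by
    apply div_pos one_pos
    have : (0:ℝ) < (K:ℝ) := by exact_mod_cast (by omega : 0 < K)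
    have : (0:ℝ) < (N:ℝ) := by exact_mod_cast (by omega : 0 < N)
    positivity
  have hmono : ∀ k ∈ Finset.Icc 1 K, ∀ n ∈ NI N Pi k,
      Real.logb 2 (1 + g k n * p k n / Γσ) ≤ Real.logb 2 (1 + g k n * p' k n / Γσ) := by
    intro k hk n hn
    by_cases hcase : k = K ∧ n = 1
    · obtain ⟨rfl, rfl⟩ := hcase
      have h0 : 0 ≤ g k 1 * p k 1 / Γσ := by positivity
      apply Real.logb_le_logb_of_le (by norm_num : (1:ℝ) < 2) (by linarith)
      have hpe : p k 1 ≤ p' k 1 := by simp [hp'def]; linarith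
      have h2 : g k 1 * p k 1 ≤ g k 1 * p' k 1 :=
        mul_le_mul_of_nonneg_left hpe hg1.le
      have h3 := (div_le_div_iff_of_pos_right hΓσ).mpr h2
      linarith
    · simp [hp'def, hcase]
  have hSlt : ∑ k ∈ Finset.Icc 1 K, ∑ n ∈ NI N Pi k,
        Real.logb 2 (1 + g k n * p k n / Γσ)
      < ∑ k ∈ Finset.Icc 1 K, ∑ n ∈ NI N Pi k,
        Real.logb 2 (1 + g k n * p' k n / Γσ) := by
    apply Finset.sum_lt_sum
    · intro k hk
      exact Finset.sum_le_sum (hmono k hk)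
    · refine ⟨K, hKmem, ?_⟩
      apply Finset.sum_lt_sum
      · intro n hn
        exact hmono K hKmem n hn
      · refine ⟨1, h1NI, ?_⟩
        have h0 : 0 ≤ g K 1 * p K 1 / Γσ := by positivity
        apply Real.logb_lt_logb (by norm_num : (1:ℝ) < 2) (by linarith)
        have hpe : p K 1 < p' K 1 := by simp [hp'def]; linarith
        have h2 : g K 1 * p K 1 < g K 1 * p' K 1 :=
          mul_lt_mul_of_pos_left hpe hg1
        have h3 := (div_lt_div_iff_of_pos_right hΓσ).mpr h2
        linarith
  have : RateP K N g Γσ Pi p < RateP K N g Γσ Pi p' := by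
    unfold RateP
    exact mul_lt_mul_of_pos_left hSlt hc
  linarith
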